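/- Bernstein's inequality on the torus (one direction, L^∞ case): if f : 𝕋³ → ℂ is a trigonometric polynomial whose Fourier coefficients are supported in the annulus {k ∈ ℤ³ : 2^{q-1} ≤ |k| ≤ 2^{q+1}}, then for every multi-index α, ‖∂^α f‖_{L^∞} ≤ C_{|α|} · 2^{q|α|} · ‖f‖_{L^∞}, with constant depending only on |α| (and dimension). -/

import Mathlib

/-!
On the circle, a trigonometric polynomial `p` with frequencies `|j| ≤ N` satisfies
`‖p'‖_∞ ≤ 2N ‖p‖_∞`: with `D_N(u) = ∑_{0 ≤ a < N} e^{iau}`, the kernel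
`K(u) = i (e^{iNu} - e^{-iNu}) |D_N(u)|²` has Fourier coefficient `ij` at every `|j| ≤ N`
(a difference of two shifted Fejér coefficients), so `p' = p * K`; and `|K| ≤ 2 |D_N|²`, whose
mean is `N`. Everything is exact for the average over `4N + 1` equally spaced nodes, so no
integration is needed. On the torus, each `∂_m` is this estimate along the `m`-th coordinate
line, and iterating it `|α|` times with `N = ⌊2^{q+1}⌋` gives `C_n = 4^n`.
-/

open Complex Finset ComplexConjugate

noncomputable def expMode (m : ℤ) (u : ℝ) : ℂ := exp (I * m * u)

lemma norm_expMode (m : ℤ) (u : ℝ) : ‖expMode m u‖ = 1 := by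
  rw [expMode, norm_exp]
  simp

lemma expMode_add (m m' : ℤ) (u : ℝ) : expMode (m + m') u = expMode m u * expMode m' u := by
  rw [expMode, expMode, expMode, ← exp_add]
  push_cast
  ring_nf

lemma conj_expMode (m : ℤ) (u : ℝ) : conj (expMode m u) = expMode (-m) u := by
  rw [expMode, expMode, ← exp_conj]
  simp

lemma expMode_sub (m : ℤ) (u v : ℝ) : expMode m (u - v) = expMode m u * expMode (-m) v := by
  rw [expMode, expMode, expMode, ← exp_add]
  push_cast
  ring_nf

lemma expMode_zero_left (u : ℝ) : expMode 0 u = 1 := by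
  simp [expMode]

lemma expMode_zero_right (m : ℤ) : expMode m 0 = 1 := by
  simp [expMode]

noncomputable def nodeSum (L : ℕ) (f : ℝ → ℂ) : ℂ := ∑ l ∈ range L, f (2 * Real.pi * l / L)

lemma nodeSum_expMode (L : ℕ) (m : ℤ) :
    nodeSum L (expMode m) = if (L : ℤ) ∣ m then (L : ℂ) else 0 := by
  rcases Nat.eq_zero_or_pos L with rfl | hL
  · simp [nodeSum]
  set ζ := exp (2 * Real.pi * I / L)
  have hζ : IsPrimitiveRoot ζ L := isPrimitiveRoot_exp L hL.ne'
  have hnode : ∀ l : ℕ, expMode m (2 * Real.pi * l / L) = (ζ ^ m) ^ l := by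
    intro l
    rw [← zpow_natCast, ← zpow_mul, ← exp_int_mul, expMode]
    push_cast
    ring_nf
  simp only [nodeSum, hnode]
  split_ifs with hdvd
  · simp [(hζ.zpow_eq_one_iff_dvd m).2 hdvd]
  · have hne : ζ ^ m ≠ 1 := fun h => hdvd ((hζ.zpow_eq_one_iff_dvd m).1 h)
    have hpow : (ζ ^ m) ^ L = 1 := by
      rw [← zpow_natCast, ← zpow_mul, mul_comm, zpow_mul, zpow_natCast, hζ.pow_eq_one, one_zpow]
    rw [geom_sum_eq hne, hpow, sub_self, zero_div]

lemma nodeSum_sum {ι : Type*} (L : ℕ) (s : Finset ι) (f : ι → ℝ → ℂ) :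
    nodeSum L (fun u => ∑ i ∈ s, f i u) = ∑ i ∈ s, nodeSum L (f i) :=
  sum_comm

lemma nodeSum_const_mul (L : ℕ) (c : ℂ) (f : ℝ → ℂ) :
    nodeSum L (fun u => c * f u) = c * nodeSum L f :=
  (mul_sum _ _ _).symm

lemma nodeSum_sub (L : ℕ) (f g : ℝ → ℂ) :
    nodeSum L (fun u => f u - g u) = nodeSum L f - nodeSum L g :=
  sum_sub_distrib _ _

noncomputable def dirichletSum (N : ℕ) (u : ℝ) : ℂ := ∑ a ∈ Ico (0 : ℤ) N, expMode a u

lemma normSq_dirichletSum (N : ℕ) (u : ℝ) :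
    (normSq (dirichletSum N u) : ℂ)
      = ∑ a ∈ Ico (0 : ℤ) N, ∑ c ∈ Ico (0 : ℤ) N, expMode (a - c) u := by
  rw [← mul_conj, dirichletSum, map_sum, sum_mul_sum]
  simp only [conj_expMode, ← expMode_add, sub_eq_add_neg]

-- The truncated subtraction is intended: the count is `0` once `|m| ≥ N`.
lemma card_filter_sub_eq (N : ℕ) (m : ℤ) :
    #{p ∈ Ico (0 : ℤ) N ×ˢ Ico (0 : ℤ) N | p.1 - p.2 = m} = N - m.natAbs := by
  rw [card_nbij (t := Ico (max 0 m) (min N (N + m))) Prod.fst, Int.card_Ico]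
  · omega
  · intro p hp
    simp only [coe_filter, mem_product, mem_Ico, Set.mem_ofPred_eq, coe_Ico, Set.mem_Ico] at hp ⊢
    omega
  · intro p hp p' hp' h
    simp only [coe_filter, mem_product, mem_Ico, Set.mem_ofPred_eq] at hp hp'
    exact Prod.ext h (by omega)
  · intro a ha
    simp only [coe_Ico, Set.mem_Ico] at ha
    refine ⟨(a, a - m), ?_, rfl⟩
    simp only [coe_filter, mem_product, mem_Ico, Set.mem_ofPred_eq]
    omega

lemma nodeSum_expMode_mul_normSq_dirichletSum {N L : ℕ} {m : ℤ} (h : N + m.natAbs ≤ L) :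
    nodeSum L (fun u => expMode (-m) u * normSq (dirichletSum N u)) = L * (N - m.natAbs : ℕ) := by
  have hnode : ∀ a ∈ Ico (0 : ℤ) N, ∀ c ∈ Ico (0 : ℤ) N,
      nodeSum L (expMode (a - c - m)) = if a - c = m then (L : ℂ) else 0 := by
    intro a ha c hc
    rw [mem_Ico] at ha hc
    rw [nodeSum_expMode]
    refine if_congr ⟨fun hdvd => ?_, fun he => by simp [he]⟩ rfl rfl
    have := Int.eq_zero_of_abs_lt_dvd hdvd (by rw [Int.abs_eq_natAbs]; omega)
    omega
  calc nodeSum L (fun u => expMode (-m) u * normSq (dirichletSum N u))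
      = ∑ a ∈ Ico (0 : ℤ) N, ∑ c ∈ Ico (0 : ℤ) N, nodeSum L (expMode (a - c - m)) := by
        simp only [normSq_dirichletSum, mul_sum, ← expMode_add, nodeSum_sum, neg_add_eq_sub]
    _ = ∑ a ∈ Ico (0 : ℤ) N, ∑ c ∈ Ico (0 : ℤ) N, if a - c = m then (L : ℂ) else 0 :=
        sum_congr rfl fun a ha => sum_congr rfl fun c hc => hnode a ha c hc
    _ = L * (N - m.natAbs : ℕ) := by
        rw [← sum_product' (f := fun a c => if a - c = m then (L : ℂ) else 0), ← sum_filter,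
          sum_const, card_filter_sub_eq, nsmul_eq_mul, mul_comm]

-- Equal to `-2 sin (N u) |D_N(u)|²`.
noncomputable def bernsteinKernel (N : ℕ) (u : ℝ) : ℂ :=
  I * (expMode N u - expMode (-N) u) * normSq (dirichletSum N u)

lemma norm_bernsteinKernel_le (N : ℕ) (u : ℝ) :
    ‖bernsteinKernel N u‖ ≤ 2 * normSq (dirichletSum N u) := by
  rw [bernsteinKernel, norm_mul, norm_mul, norm_I, one_mul, norm_real, Real.norm_eq_abs,
    abs_of_nonneg (normSq_nonneg _)]
  refine mul_le_mul_of_nonneg_right ?_ (normSq_nonneg _)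
  calc ‖expMode N u - expMode (-N) u‖ ≤ ‖expMode N u‖ + ‖expMode (-N) u‖ := norm_sub_le _ _
    _ = 2 := by rw [norm_expMode, norm_expMode]; norm_num

lemma nodeSum_expMode_mul_bernsteinKernel {N : ℕ} {j : ℤ} (hj : j.natAbs ≤ N) :
    nodeSum (4 * N + 1) (fun u => expMode (-j) u * bernsteinKernel N u)
      = (4 * N + 1 : ℕ) * (I * j) := by
  have hcoeff : ∀ u, expMode (-j) u * bernsteinKernel N u
      = I * (expMode (-(j - N)) u * normSq (dirichletSum N u)
        - expMode (-(j + N)) u * normSq (dirichletSum N u)) := by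
    intro u
    rw [bernsteinKernel, show -(j - N) = -j + N by ring, show -(j + N) = -j + -N by ring,
      expMode_add, expMode_add]
    ring
  simp only [hcoeff]
  rw [nodeSum_const_mul, nodeSum_sub, nodeSum_expMode_mul_normSq_dirichletSum (by omega),
    nodeSum_expMode_mul_normSq_dirichletSum (by omega)]
  have hcount : ((N - (j - N).natAbs : ℕ) : ℂ) - (N - (j + N).natAbs : ℕ) = j := by
    exact_mod_cast (by omega : ((N - (j - N).natAbs : ℕ) : ℤ) - (N - (j + N).natAbs : ℕ) = j)
  rw [← mul_sub, hcount]
  ring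

noncomputable def trigPoly {ι : Type*} (S : Finset ι) (b : ι → ℂ) (j : ι → ℤ) (t : ℝ) : ℂ :=
  ∑ i ∈ S, b i * expMode (j i) t

lemma nodeSum_trigPoly_sub_mul {ι : Type*} (L : ℕ) (S : Finset ι) (b : ι → ℂ) (j : ι → ℤ)
    (Q : ℝ → ℂ) (t : ℝ) :
    nodeSum L (fun y => trigPoly S b j (t - y) * Q y)
      = trigPoly S (fun i => b i * nodeSum L (fun y => expMode (-j i) y * Q y)) j t := by
  simp only [trigPoly, sum_mul, expMode_sub, nodeSum_sum, mul_assoc, nodeSum_const_mul]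
  exact sum_congr rfl fun i _ => by ring

theorem norm_trigPoly_deriv_le {ι : Type*} (S : Finset ι) (b : ι → ℂ) (j : ι → ℤ) (N : ℕ)
    (hj : ∀ i ∈ S, (j i).natAbs ≤ N) (M : ℝ) (hM : ∀ t, ‖trigPoly S b j t‖ ≤ M) (t : ℝ) :
    ‖trigPoly S (fun i => b i * (I * j i)) j t‖ ≤ 2 * N * M := by
  set L := 4 * N + 1
  have hM0 : 0 ≤ M := (norm_nonneg _).trans (hM 0)
  have hrepr : (L : ℂ) * trigPoly S (fun i => b i * (I * j i)) j t
      = nodeSum L (fun y => trigPoly S b j (t - y) * bernsteinKernel N y) := by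
    rw [nodeSum_trigPoly_sub_mul, trigPoly, trigPoly, mul_sum]
    refine sum_congr rfl fun i hi => ?_
    rw [nodeSum_expMode_mul_bernsteinKernel (hj i hi)]
    ring
  have hmass : ∑ l ∈ range L, normSq (dirichletSum N (2 * Real.pi * l / L)) = L * N := by
    have := nodeSum_expMode_mul_normSq_dirichletSum (N := N) (L := L) (m := 0) (by omega)
    simp only [neg_zero, expMode_zero_left, one_mul, Int.natAbs_zero, Nat.sub_zero, nodeSum] at this
    exact_mod_cast this
  have hbound :
      ‖nodeSum L (fun y => trigPoly S b j (t - y) * bernsteinKernel N y)‖ ≤ L * (2 * N * M) :=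
    calc _ ≤ ∑ l ∈ range L, M * (2 * normSq (dirichletSum N (2 * Real.pi * l / L))) :=
          (norm_sum_le _ _).trans (sum_le_sum fun l _ => by
            rw [norm_mul]
            exact mul_le_mul (hM _) (norm_bernsteinKernel_le _ _) (norm_nonneg _) hM0)
      _ = L * (2 * N * M) := by rw [← mul_sum, ← mul_sum, hmass]; ring
  rw [← hrepr, norm_mul, Complex.norm_natCast] at hbound
  exact le_of_mul_le_mul_left hbound (by positivity)

section Torus

variable {σ : Type*} [Fintype σ]

noncomputable def planeWave (k : σ → ℤ) (x : σ → ℝ) : ℂ :=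
  exp (I * ((∑ m, (k m : ℝ) * x m : ℝ) : ℂ))

lemma planeWave_add_single [DecidableEq σ] (k : σ → ℤ) (x : σ → ℝ) (m : σ) (t : ℝ) :
    planeWave k (x + Pi.single m t) = planeWave k x * expMode (k m) t := by
  have hphase : ∑ i, (k i : ℝ) * (x + Pi.single m t : σ → ℝ) i = ∑ i, k i * x i + k m * t := by
    simp only [Pi.add_apply, mul_add, sum_add_distrib, Pi.single_apply, mul_ite, mul_zero,
      sum_ite_eq', mem_univ, if_true]
  rw [planeWave, planeWave, expMode, hphase, ← exp_add]
  push_cast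
  ring_nf

variable [DecidableEq σ] {s : Finset (σ → ℤ)} {N : ℕ}

theorem norm_sum_mul_I_mul_planeWave_le {m : σ} (hs : ∀ k ∈ s, (k m).natAbs ≤ N)
    {c : (σ → ℤ) → ℂ} {M : ℝ} (hM : ∀ x, ‖∑ k ∈ s, c k * planeWave k x‖ ≤ M) (x : σ → ℝ) :
    ‖∑ k ∈ s, c k * (I * k m) * planeWave k x‖ ≤ 2 * N * M := by
  have hline : ∀ t, ‖trigPoly s (fun k => c k * planeWave k x) (fun k => k m) t‖ ≤ M := by
    intro t
    have := hM (x + Pi.single m t)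
    simp only [planeWave_add_single, ← mul_assoc] at this
    exact this
  convert norm_trigPoly_deriv_le s _ _ N hs M hline 0 using 2
  simp only [trigPoly, expMode_zero_right, mul_one]
  exact sum_congr rfl fun k _ => by ring

theorem norm_sum_mul_pow_mul_planeWave_le {m : σ} (hs : ∀ k ∈ s, (k m).natAbs ≤ N)
    {c : (σ → ℤ) → ℂ} {M : ℝ} (hM : ∀ x, ‖∑ k ∈ s, c k * planeWave k x‖ ≤ M) (r : ℕ) (x : σ → ℝ) :
    ‖∑ k ∈ s, c k * (I * k m) ^ r * planeWave k x‖ ≤ (2 * N) ^ r * M := by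
  induction r generalizing x with
  | zero => simpa using hM x
  | succ r ih =>
    simpa only [pow_succ, ← mul_assoc, mul_comm _ (2 * (N : ℝ))]
      using norm_sum_mul_I_mul_planeWave_le hs ih x

theorem norm_sum_mul_monomial_mul_planeWave_le (hs : ∀ k ∈ s, ∀ m, (k m).natAbs ≤ N)
    (α : σ → ℕ) {c : (σ → ℤ) → ℂ} {M : ℝ} (hM : ∀ x, ‖∑ k ∈ s, c k * planeWave k x‖ ≤ M)
    (x : σ → ℝ) :
    ‖∑ k ∈ s, c k * (∏ m, (I * k m) ^ α m) * planeWave k x‖ ≤ (2 * N) ^ (∑ m, α m) * M := by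
  induction α using Pi.single_induction generalizing c M x with
  | zero => simpa using hM x
  | add α β hα hβ =>
    calc _ = ‖∑ k ∈ s,
            (c k * ∏ m, (I * k m) ^ α m) * (∏ m, (I * k m) ^ β m) * planeWave k x‖ := by
          simp only [Pi.add_apply, pow_add, prod_mul_distrib, mul_assoc]
      _ ≤ (2 * N) ^ (∑ m, β m) * ((2 * N) ^ (∑ m, α m) * M) := hβ (hα hM) x
      _ = _ := by simp only [Pi.add_apply, sum_add_distrib, pow_add]; ring
  | single i r =>
    have hprod : ∀ k : σ → ℤ, ∏ m, (I * k m) ^ (Pi.single i r : σ → ℕ) m = (I * k i) ^ r :=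
      fun k =>
        (prod_eq_single i (fun m _ hm => by simp [hm]) (by simp)).trans (by simp)
    simpa only [hprod, sum_pi_single', mem_univ, if_true]
      using norm_sum_mul_pow_mul_planeWave_le (fun k hk => hs k hk i) hM r x

end Torus

/-- Bernstein's inequality on the torus (`L^∞` case): if `f(x) = ∑_{k ∈ s} c_k e^{ik·x}`
is a trigonometric polynomial with Fourier support in the annulus
`{k : 2^{q-1} ≤ |k| ≤ 2^{q+1}}`, then for every multi-index `α`,
`‖∂^α f‖_∞ ≤ C_{|α|} 2^{q|α|} ‖f‖_∞`, with constant depending only on `|α|`. -/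
theorem bernstein_torus :
    ∃ C : ℕ → ℝ, (∀ n, 0 < C n) ∧
      ∀ (q : ℤ) (s : Finset (Fin 3 → ℤ)),
        (∀ k ∈ s,
          (2 : ℝ) ^ (q - 1) ≤ Real.sqrt (∑ m, ((k m : ℝ)) ^ 2) ∧
          Real.sqrt (∑ m, ((k m : ℝ)) ^ 2) ≤ (2 : ℝ) ^ (q + 1)) →
        ∀ (c : (Fin 3 → ℤ) → ℂ) (α : Fin 3 → ℕ) (M : ℝ),
          (∀ x : Fin 3 → ℝ,
            ‖∑ k ∈ s, c k * Complex.exp (Complex.I * ((∑ m, (k m : ℝ) * x m : ℝ) : ℂ))‖ ≤ M) →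
          ∀ x : Fin 3 → ℝ,
            ‖∑ k ∈ s, c k * (∏ m, (Complex.I * ((k m : ℝ) : ℂ)) ^ (α m)) *
                Complex.exp (Complex.I * ((∑ m, (k m : ℝ) * x m : ℝ) : ℂ))‖
              ≤ C (∑ m, α m) * (2 : ℝ) ^ (q * (∑ m, α m : ℤ)) * M := by
  refine ⟨fun n => 4 ^ n, fun n => by positivity, ?_⟩
  intro q s hs c α M hM x
  set N := ⌊(2 : ℝ) ^ (q + 1)⌋₊
  have hN : ∀ k ∈ s, ∀ m, (k m).natAbs ≤ N := fun k hk m => Nat.le_floor <| by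
    rw [Nat.cast_natAbs, Int.cast_abs]
    exact (Real.abs_le_sqrt (single_le_sum (fun i _ => sq_nonneg ((k i : ℝ))) (mem_univ m))).trans
      (hs k hk).2
  have h2N : 2 * (N : ℝ) ≤ 4 * 2 ^ q := by
    have : (N : ℝ) ≤ 2 ^ (q + 1) := Nat.floor_le (zpow_nonneg zero_le_two _)
    rw [zpow_add_one₀ two_ne_zero] at this
    linarith
  have hM0 : 0 ≤ M := (norm_nonneg _).trans (hM x)
  calc _ ≤ (2 * N) ^ (∑ m, α m) * M := by
        simpa only [planeWave, ofReal_intCast]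
          using norm_sum_mul_monomial_mul_planeWave_le hN α hM x
    _ ≤ (4 * 2 ^ q) ^ (∑ m, α m) * M := by gcongr
    _ = _ := by rw [mul_pow, ← zpow_natCast (2 ^ q : ℝ), ← zpow_mul]; push_cast; ring
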